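/- arXiv:1210.1487 — 9 statements merged into one kernel-verified Lean document; each statement's English description precedes it below -/
import Mathlib

section
/- Let A be a commutative Artinian local ring with maximal ideal m and residue field κ = A/m, let (d^{i−1}, d^i) be a complex of free modules over A with middle rank l, and let a, b ≥ 1 be integers. Assume I_a(d^{i−1}) = 0, I_b(d^i) = 0, I_{a−1}(d^{i−1}⊗κ) ≠ 0 and I_{b−1}(d^i⊗κ) ≠ 0. Then im(d^{i−1}) and im(d^i) are free A-modules of ranks a−1 and b−1 respectively, and the i-th cohomology H^i is a free A-module of rank l − a − b + 2. -/
/-- The determinantal ideal `I_m(M)`: the ideal generated by the `m × m` minors of `M`,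
with the convention `I_m(M) = ⊤` for `m ≤ 0`; it is automatically `0` when
`m` exceeds the number of rows or columns of `M`. -/
def detIdeal {A : Type*} [CommRing A] {I J : Type*} (M : Matrix I J A) (m : ℤ) : Ideal A :=
  if m ≤ 0 then ⊤
  else Ideal.span {x | ∃ (r : Fin m.toNat → I) (c : Fin m.toNat → J),
    Function.Injective r ∧ Function.Injective c ∧ x = (M.submatrix r c).det}

/-- The `i`-th cohomology jump ideal `J^i_k = ⋂_{(a,b), a+b = l-k+2} (I_a(d¹) + I_b(d²))`
of a complex `A^{l´} → A^l → A^{l´´}` with middle rank `l`, parametrized by `b = l-k+2-a`. -/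
def jumpIdeal {A : Type*} [CommRing A] {l l1 l2 : ℕ}
    (d1 : Matrix (Fin l) (Fin l1) A) (d2 : Matrix (Fin l2) (Fin l) A) (k : ℤ) : Ideal A :=
  ⨅ a : ℤ, detIdeal d1 a + detIdeal d2 ((l : ℤ) - k + 2 - a)

/-- The middle cohomology `H^i = ker(d²) / im(d¹)` of the complex
`A^{l´} → A^l → A^{l´´}` given by the matrices `d1`, `d2`. -/
abbrev midCohomology {A : Type*} [CommRing A] {l l1 l2 : ℕ}
    (d1 : Matrix (Fin l) (Fin l1) A) (d2 : Matrix (Fin l2) (Fin l) A) :=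
  LinearMap.ker d2.mulVecLin ⧸
    (LinearMap.range d1.mulVecLin).comap (LinearMap.ker d2.mulVecLin).subtype

/-!
If the `(r+1)`-minors of a matrix `M` vanish and the `r`-minor `B = M[s,t]` is a unit, then
bordering `B` by any row and column gives `M = M[:,t] B⁻¹ M[s,:]`. Hence `im M = im M[:,t]`, and
`M[:,t]` is split injective (with left inverse `x ↦ B⁻¹ x[s]`), so `im M` is a free direct summand
of rank `r`. Over a local ring, `I_{r+1}(M) = 0` and `I_r(M ⊗ κ) ≠ 0` provide such minors.

For the complex, `im d²` is free of rank `b - 1`, so `A^l → im d²` splits and `ker d²` is a direct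
summand of rank `l - (b - 1)`; the summand `im d¹` of `A^l` lies in `ker d²`, hence is a summand
of it too. Direct summands of finite free modules over a local ring are finite projective, hence
free, so `H^i = ker d² / im d¹` is free of rank `l - (b - 1) - (a - 1)`.
-/

open Module

namespace Submodule

variable {A M : Type*} [CommRing A] [AddCommGroup M] [Module A M]

theorem finite_of_isComplemented [Module.Finite A M] {N : Submodule A M} (h : IsComplemented N) :
    Module.Finite A N :=
  have ⟨W, hW⟩ := h
  .of_surjective (N.projectionOnto W hW) (projectionOnto_surjective hW)

theorem isComplemented_comap_subtype {N K : Submodule A M} (hNK : N ≤ K) (h : IsComplemented N) :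
    IsComplemented (N.comap K.subtype) :=
  have ⟨W, hW⟩ := h
  ⟨_, LinearMap.isCompl_of_proj (f := (comapSubtypeEquivOfLe hNK).symm.toLinearMap ∘ₗ
    N.projectionOnto W hW ∘ₗ K.subtype) fun x => by
      apply (comapSubtypeEquivOfLe hNK).injective
      ext
      simp [projectionOnto_apply_left hW ⟨x, x.2⟩]⟩

variable [IsLocalRing A] [Module.Free A M] [Module.Finite A M]

theorem free_of_isComplemented {N : Submodule A M} (h : IsComplemented N) : Module.Free A N :=
  have ⟨W, hW⟩ := h
  have := finite_of_isComplemented h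
  have := Module.Projective.of_split N.subtype (N.projectionOnto W hW)
    (LinearMap.ext (projectionOnto_apply_left hW))
  free_of_flat_of_isLocalRing

theorem free_quotient_of_isComplemented {N : Submodule A M} (h : IsComplemented N) :
    Module.Free A (M ⧸ N) :=
  have ⟨W, hW⟩ := h
  have := free_of_isComplemented ⟨N, hW.symm⟩
  .of_equiv (quotientEquivOfIsCompl N W hW).symm

theorem finrank_add_finrank_quotient_of_isComplemented {N : Submodule A M}
    (h : IsComplemented N) : finrank A N + finrank A (M ⧸ N) = finrank A M := by
  obtain ⟨W, hW⟩ := h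
  have := free_of_isComplemented ⟨W, hW⟩
  have := free_of_isComplemented ⟨N, hW.symm⟩
  have := finite_of_isComplemented ⟨W, hW⟩
  have := finite_of_isComplemented ⟨N, hW.symm⟩
  rw [(quotientEquivOfIsCompl N W hW).finrank_eq, ← finrank_prod,
    (prodEquivOfIsCompl N W hW).finrank_eq]

end Submodule

namespace LinearMap

variable {A M F : Type*} [CommRing A] [AddCommGroup M] [Module A M] [AddCommGroup F] [Module A F]

theorem isComplemented_ker_of_projective_range (f : M →ₗ[A] F)
    [Module.Projective A (range f)] : IsComplemented (ker f) := by
  obtain ⟨σ, hσ⟩ := Module.projective_lifting_property f.rangeRestrict LinearMap.id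
    f.surjective_rangeRestrict
  have hσ' (y : range f) : f (σ y) = y := congr_arg Subtype.val (LinearMap.congr_fun hσ y)
  refine ⟨_, isCompl_of_proj (f := (LinearMap.id - σ ∘ₗ f.rangeRestrict).codRestrict (ker f)
    fun x => by simp [hσ']) fun x => ?_⟩
  have hx : f.rangeRestrict x = 0 := Subtype.ext (LinearMap.mem_ker.mp x.2)
  ext
  simp [hx]

theorem isComplemented_range_of_leftInverse {G : F →ₗ[A] M} {L : M →ₗ[A] F}
    (h : Function.LeftInverse L G) : IsComplemented (range G) :=
  ⟨_, isCompl_of_proj (f := (LinearEquiv.ofLeftInverse h).toLinearMap ∘ₗ L) fun ⟨_, y, rfl⟩ => by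
    ext; simp [h y]⟩

end LinearMap

namespace Matrix

variable {A p q : Type*} [CommRing A]

theorem det_submatrix_eq_zero_of_detIdeal_eq_bot {M : Matrix p q A} {n : ℕ} (hn : n ≠ 0)
    (h : detIdeal M n = ⊥) (s : Fin n → p) (t : Fin n → q) : (M.submatrix s t).det = 0 := by
  by_cases hst : s.Injective ∧ t.Injective
  · rw [detIdeal, if_neg (by omega), Ideal.span_eq_bot] at h
    exact h _ ⟨s, t, hst.1, hst.2, rfl⟩
  · simp_rw [not_and_or, Function.not_injective_iff] at hst
    obtain ⟨i, j, hs, hij⟩ | ⟨i, j, ht, hij⟩ := hst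
    · exact det_zero_of_row_eq hij (by ext; simp [hs])
    · exact det_zero_of_column_eq hij (by simp [ht])

theorem exists_isUnit_det_submatrix_of_detIdeal_map_residue_ne_bot [IsLocalRing A]
    {M : Matrix p q A} {n : ℕ} (h : detIdeal (M.map (IsLocalRing.residue A)) n ≠ ⊥) :
    ∃ (s : Fin n → p) (t : Fin n → q), IsUnit (M.submatrix s t).det := by
  rcases Nat.eq_zero_or_pos n with rfl | hn
  · exact ⟨Fin.elim0, Fin.elim0, by simp⟩
  rw [detIdeal, if_neg (by omega), Ne, Ideal.span_eq_bot] at h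
  push Not at h
  obtain ⟨_, ⟨s, t, -, -, rfl⟩, hne⟩ := h
  refine ⟨s, t, (IsLocalRing.residue_ne_zero_iff_isUnit _).mp ?_⟩
  rwa [RingHom.map_det, RingHom.mapMatrix_apply, ← Matrix.submatrix_map]


theorem eq_submatrix_mul_inv_mul_submatrix {r : ℕ} (M : Matrix p q A) (s : Fin r → p)
    (t : Fin r → q) (hU : IsUnit (M.submatrix s t).det)
    (hmin : ∀ (s' : Fin (r + 1) → p) (t' : Fin (r + 1) → q), (M.submatrix s' t').det = 0) :
    M = M.submatrix id t * (M.submatrix s t)⁻¹ * M.submatrix s id := by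
  set B := M.submatrix s t
  have := B.invertibleOfIsUnitDet hU
  ext i j
  -- the `(r+1)`-minor bordering `B` by row `i` and column `j` vanishes: take its Schur complement
  let v : Matrix (Fin r) (Fin 1) A := .of fun k _ => M (s k) j
  let w : Matrix (Fin 1) (Fin r) A := .of fun _ k => M i (t k)
  have hborder : (fromBlocks B v w (.of fun _ _ => M i j)).det = 0 := by
    rw [← hmin ((Sum.elim s fun _ => i) ∘ finSumFinEquiv.symm)
      ((Sum.elim t fun _ => j) ∘ finSumFinEquiv.symm),
      ← det_submatrix_equiv_self finSumFinEquiv, submatrix_submatrix]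
    congr 1
    ext (k | k) (k' | k') <;> simp [B, v, w]
  rw [det_fromBlocks₁₁, hU.mul_right_eq_zero, det_fin_one, sub_apply, sub_eq_zero,
    invOf_eq_nonsing_inv, of_apply] at hborder
  rw [hborder]
  simp [mul_apply, v, w]

theorem exists_leftInverse_range_mulVecLin_eq [IsLocalRing A] [Fintype q] {M : Matrix p q A}
    {r : ℕ} (h : detIdeal M (r + 1 : ℕ) = ⊥)
    (h' : detIdeal (M.map (IsLocalRing.residue A)) r ≠ ⊥) :
    ∃ (G : (Fin r → A) →ₗ[A] (p → A)) (L : (p → A) →ₗ[A] (Fin r → A)),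
      Function.LeftInverse L G ∧ LinearMap.range M.mulVecLin = LinearMap.range G := by
  classical
  obtain ⟨s, t, hU⟩ := exists_isUnit_det_submatrix_of_detIdeal_map_residue_ne_bot h'
  have hM := eq_submatrix_mul_inv_mul_submatrix M s t hU
    (det_submatrix_eq_zero_of_detIdeal_eq_bot r.succ_ne_zero h)
  refine ⟨(M.submatrix id t).mulVecLin,
    (M.submatrix s t)⁻¹.mulVecLin ∘ₗ LinearMap.funLeft A A s, fun x => ?_, le_antisymm ?_ ?_⟩
  · change (M.submatrix s t)⁻¹ *ᵥ (M.submatrix s t *ᵥ x) = x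
    rw [mulVec_mulVec, nonsing_inv_mul _ hU, one_mulVec]
  · conv_lhs => rw [hM, Matrix.mul_assoc, mulVecLin_mul]
    exact LinearMap.range_comp_le_range _ _
  · have hG : M * (1 : Matrix q q A).submatrix id t = M.submatrix id t := by
      simpa using M.mul_submatrix_one (Equiv.refl q) t
    conv_lhs => rw [← hG, mulVecLin_mul]
    exact LinearMap.range_comp_le_range _ _

end Matrix

theorem images_and_cohomology_free_general
    {A : Type*} [CommRing A] [IsLocalRing A]
    {l l1 l2 : ℕ} (d1 : Matrix (Fin l) (Fin l1) A) (d2 : Matrix (Fin l2) (Fin l) A)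
    (hcx : d2 * d1 = 0) (a b : ℕ) (ha : 1 ≤ a) (hb : 1 ≤ b)
    (h1 : detIdeal d1 (a : ℤ) = ⊥)
    (h2 : detIdeal d2 (b : ℤ) = ⊥)
    (h1' : detIdeal (d1.map (IsLocalRing.residue A)) ((a : ℤ) - 1) ≠ ⊥)
    (h2' : detIdeal (d2.map (IsLocalRing.residue A)) ((b : ℤ) - 1) ≠ ⊥) :
    Nonempty (LinearMap.range d1.mulVecLin ≃ₗ[A] (Fin (a - 1) → A)) ∧
    Nonempty (LinearMap.range d2.mulVecLin ≃ₗ[A] (Fin (b - 1) → A)) ∧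
    Nonempty (midCohomology d1 d2 ≃ₗ[A] (Fin (l + 2 - a - b) → A)) := by
  obtain ⟨r, rfl⟩ := Nat.exists_eq_add_of_le' ha
  obtain ⟨m, rfl⟩ := Nat.exists_eq_add_of_le' hb
  obtain ⟨G1, L1, hLG1, hrange1⟩ :=
    Matrix.exists_leftInverse_range_mulVecLin_eq h1 (by simpa using h1')
  obtain ⟨G2, L2, hLG2, hrange2⟩ :=
    Matrix.exists_leftInverse_range_mulVecLin_eq h2 (by simpa using h2')
  let e1 := (LinearEquiv.ofEq _ _ hrange1).trans (LinearEquiv.ofLeftInverse hLG1).symm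
  let e2 := (LinearEquiv.ofEq _ _ hrange2).trans (LinearEquiv.ofLeftInverse hLG2).symm
  set K := LinearMap.ker d2.mulVecLin
  have hNK : LinearMap.range d1.mulVecLin ≤ K := LinearMap.range_le_ker_iff.mpr <| by
    rw [← Matrix.mulVecLin_mul, hcx, Matrix.mulVecLin_zero]
  have := Module.Free.of_equiv e2.symm
  have hK : IsComplemented K := LinearMap.isComplemented_ker_of_projective_range _
  have hN : IsComplemented ((LinearMap.range d1.mulVecLin).comap K.subtype) :=
    Submodule.isComplemented_comap_subtype hNK
      (hrange1 ▸ LinearMap.isComplemented_range_of_leftInverse hLG1)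
  have := Submodule.free_of_isComplemented hK
  have := Submodule.finite_of_isComplemented hK
  have := Submodule.free_quotient_of_isComplemented hN
  have hrankK : finrank A K + m = l := by
    rw [← finrank_fin_fun A (n := m), ← (d2.mulVecLin.quotKerEquivRange.trans e2).finrank_eq,
      Submodule.finrank_add_finrank_quotient_of_isComplemented hK, finrank_fin_fun]
  have hrankH : r + finrank A (midCohomology d1 d2) = finrank A K := by
    rw [← Submodule.finrank_add_finrank_quotient_of_isComplemented hN,
      ((Submodule.comapSubtypeEquivOfLe hNK).trans e1).finrank_eq, finrank_fin_fun]
  exact ⟨⟨e1⟩, ⟨e2⟩, ⟨(finBasisOfFinrankEq A _ (by omega)).equivFun⟩⟩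

/-- Let `A` be an Artinian local ring with residue field `κ`,
`(d1, d2)` a complex of free `A`-modules with middle rank `l`, and `a, b ≥ 1`.
Assume `I_a(d1) = 0`, `I_b(d2) = 0`, `I_{a-1}(d1 ⊗ κ) ≠ 0` and `I_{b-1}(d2 ⊗ κ) ≠ 0`.
Then `im d1` and `im d2` are free `A`-modules of ranks `a-1` and `b-1` respectively,
and the middle cohomology `H^i` is a free `A`-module of rank `l - a - b + 2`. -/
theorem images_and_cohomology_free
    {A : Type*} [CommRing A] [IsArtinianRing A] [IsLocalRing A]
    {l l1 l2 : ℕ} (d1 : Matrix (Fin l) (Fin l1) A) (d2 : Matrix (Fin l2) (Fin l) A)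
    (hcx : d2 * d1 = 0) (a b : ℕ) (ha : 1 ≤ a) (hb : 1 ≤ b)
    (h1 : detIdeal d1 (a : ℤ) = ⊥)
    (h2 : detIdeal d2 (b : ℤ) = ⊥)
    (h1' : detIdeal (d1.map (IsLocalRing.residue A)) ((a : ℤ) - 1) ≠ ⊥)
    (h2' : detIdeal (d2.map (IsLocalRing.residue A)) ((b : ℤ) - 1) ≠ ⊥) :
    Nonempty (LinearMap.range d1.mulVecLin ≃ₗ[A] (Fin (a - 1) → A)) ∧
    Nonempty (LinearMap.range d2.mulVecLin ≃ₗ[A] (Fin (b - 1) → A)) ∧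
    Nonempty (midCohomology d1 d2 ≃ₗ[A] (Fin (l + 2 - a - b) → A)) :=
  images_and_cohomology_free_general d1 d2 hcx a b ha hb h1 h2 h1' h2'
end

section
/- Let A be a commutative Artinian local ring with maximal ideal m and residue field κ = A/m, let σ be a β×α matrix over A, and let c ≥ 1 be an integer. Suppose I_c(σ) = 0 and I_{c−1}(σ⊗κ) ≠ 0 (i.e., some (c−1)×(c−1) minor of σ is a unit of A). Then the image of the A-linear map σ: A^α → A^β is a free A-module of rank c−1. -/
private lemma mulVec_apply' {A : Type*} [CommRing A] {m n : ℕ}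
    (M : Matrix (Fin m) (Fin n) A) (v : Fin n → A) (i : Fin m) :
    (M.mulVec v) i = ∑ j, M i j * v j := rfl

open Matrix in
/-- Cramer/Schur key step: if the `d×d` submatrix on rows `r`, columns `s` is
invertible and all `(d+1)×(d+1)` minors vanish, then every column of `σ` is the
corresponding combination of the columns `s`. -/
private lemma key_col {A : Type*} [CommRing A] {α β d : ℕ} (σ : Matrix (Fin β) (Fin α) A)
    (r : Fin d → Fin β) (s : Fin d → Fin α)
    (hr : Function.Injective r) (hs : Function.Injective s)
    [Invertible (σ.submatrix r s)]
    (H1 : ∀ (r' : Fin (d+1) → Fin β) (s' : Fin (d+1) → Fin α),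
      Function.Injective r' → Function.Injective s' → (σ.submatrix r' s').det = 0)
    (k : Fin β) (j : Fin α) :
    σ k j = ∑ i, σ k (s i) * ((⅟(σ.submatrix r s)) *ᵥ (fun i => σ (r i) j)) i := by
  have hBx : (σ.submatrix r s) *ᵥ ((⅟(σ.submatrix r s)) *ᵥ (fun i => σ (r i) j))
      = fun i => σ (r i) j := by
    rw [mulVec_mulVec, mul_invOf_self, one_mulVec]
  by_cases hjs : ∃ i0, s i0 = j
  · obtain ⟨i0, rfl⟩ := hjs
    have hux : (⅟(σ.submatrix r s)) *ᵥ (fun i => σ (r i) (s i0)) = Pi.single i0 1 := by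
      have hu' : (fun i => σ (r i) (s i0)) = (σ.submatrix r s) *ᵥ Pi.single i0 1 := by
        ext i
        simp [mulVec_apply', Pi.single_apply, mul_ite]
      rw [hu', mulVec_mulVec, invOf_mul_self, one_mulVec]
    rw [hux]
    simp [Pi.single_apply, mul_ite]
  · push_neg at hjs
    by_cases hkr : ∃ i1, r i1 = k
    · obtain ⟨i1, rfl⟩ := hkr
      have h := congrFun hBx i1
      rw [mulVec_apply'] at h
      simp only [Matrix.submatrix_apply] at h
      exact h.symm
    · push_neg at hkr
      set r' : Fin d ⊕ Fin 1 → Fin β := Sum.elim r (fun _ => k) with hr'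
      set s' : Fin d ⊕ Fin 1 → Fin α := Sum.elim s (fun _ => j) with hs'
      have hr'i : Function.Injective r' := by
        rintro (a | a) (b | b) h
        · exact congrArg Sum.inl (hr h)
        · exact absurd h (hkr a)
        · exact absurd h.symm (hkr b)
        · exact congrArg Sum.inr (Subsingleton.elim a b)
      have hs'i : Function.Injective s' := by
        rintro (a | a) (b | b) h
        · exact congrArg Sum.inl (hs h)
        · exact absurd h (hjs a)
        · exact absurd h.symm (hjs b)
        · exact congrArg Sum.inr (Subsingleton.elim a b)
      have hdet : (σ.submatrix r' s').det = 0 := by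
        have h := H1 (r' ∘ finSumFinEquiv.symm) (s' ∘ finSumFinEquiv.symm)
          (hr'i.comp finSumFinEquiv.symm.injective) (hs'i.comp finSumFinEquiv.symm.injective)
        rwa [show σ.submatrix (r' ∘ finSumFinEquiv.symm) (s' ∘ finSumFinEquiv.symm)
            = (σ.submatrix r' s').submatrix finSumFinEquiv.symm finSumFinEquiv.symm from rfl,
          det_submatrix_equiv_self] at h
      have hM : σ.submatrix r' s' =
          fromBlocks (σ.submatrix r s) (Matrix.of fun i (_ : Fin 1) => σ (r i) j)
            (Matrix.of fun (_ : Fin 1) i => σ k (s i)) (Matrix.of fun _ _ => σ k j) := by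
        ext (i | i) (j' | j') <;> rfl
      rw [hM, det_fromBlocks₁₁] at hdet
      have hunit := isUnit_det_of_invertible (σ.submatrix r s)
      have h0 := (hunit.mul_right_eq_zero).mp hdet
      rw [det_fin_one] at h0
      have hkey : σ k j =
          ((Matrix.of fun (_ : Fin 1) i => σ k (s i)) * ⅟(σ.submatrix r s) *
            (Matrix.of fun i (_ : Fin 1) => σ (r i) j)) 0 0 := by
        have h1 : _ - _ = (0 : A) := h0
        simp only [Matrix.sub_apply, sub_eq_zero, Matrix.of_apply] at h1
        exact h1
      rw [hkey]
      simp only [Matrix.mul_apply, Matrix.of_apply, mulVec_apply',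
        Finset.sum_mul, Finset.mul_sum]
      rw [Finset.sum_comm]
      refine Finset.sum_congr rfl fun i _ => Finset.sum_congr rfl fun m _ => by ring

open Matrix in
/-- Let `A` be an Artinian local ring with residue field `κ`,
`σ` a `β × α` matrix over `A` and `c ≥ 1`. If `I_c(σ) = 0` and `I_{c-1}(σ ⊗ κ) ≠ 0`,
then the image of the `A`-linear map `σ : A^α → A^β` is a free `A`-module of
rank `c - 1`. -/
theorem image_free_of_det_ideals
    {A : Type*} [CommRing A] [IsArtinianRing A] [IsLocalRing A]
    {α β : ℕ} (σ : Matrix (Fin β) (Fin α) A) (c : ℕ) (hc : 1 ≤ c)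
    (h1 : detIdeal σ (c : ℤ) = ⊥)
    (h2 : detIdeal (σ.map (IsLocalRing.residue A)) ((c : ℤ) - 1) ≠ ⊥) :
    Nonempty (LinearMap.range σ.mulVecLin ≃ₗ[A] (Fin (c - 1) → A)) := by
  obtain ⟨d, rfl⟩ : ∃ d, c = d + 1 := ⟨c - 1, (Nat.succ_pred_eq_of_pos hc).symm⟩
  -- All (d+1)×(d+1) minors vanish
  have H1 : ∀ (r' : Fin (d+1) → Fin β) (s' : Fin (d+1) → Fin α),
      Function.Injective r' → Function.Injective s' → (σ.submatrix r' s').det = 0 := by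
    intro r' s' hr' hs'
    rw [detIdeal, if_neg (by omega)] at h1
    rw [Ideal.span_eq_bot] at h1
    exact h1 _ ⟨r', s', by simpa using hr', by simpa using hs', by simp⟩
  -- an invertible d×d submatrix
  obtain ⟨r, s, hr, hs, hunit⟩ : ∃ (r : Fin d → Fin β) (s : Fin d → Fin α),
      Function.Injective r ∧ Function.Injective s ∧ IsUnit (σ.submatrix r s).det := by
    rcases Nat.eq_zero_or_pos d with hd | hd
    · subst hd
      exact ⟨finZeroElim, finZeroElim, Function.injective_of_subsingleton _,
        Function.injective_of_subsingleton _, by simp [Matrix.det_fin_zero]⟩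
    · have hcast : ((d + 1 : ℕ) : ℤ) - 1 = (d : ℤ) := by push_cast; ring
      rw [hcast, detIdeal, if_neg (by omega)] at h2
      have hex : ∃ x ∈ {x | ∃ (r : Fin ((d : ℤ)).toNat → Fin β)
          (c : Fin ((d : ℤ)).toNat → Fin α),
          Function.Injective r ∧ Function.Injective c ∧
            x = ((σ.map (IsLocalRing.residue A)).submatrix r c).det}, x ≠ 0 := by
        by_contra h
        push_neg at h
        exact h2 (Ideal.span_eq_bot.mpr h)
      obtain ⟨x, ⟨r, s, hrinj, hsinj, rfl⟩, hx⟩ := hex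
      refine ⟨r, s, hrinj, hsinj, ?_⟩
      rw [← IsLocalRing.notMem_maximalIdeal]
      intro hmem
      apply hx
      rw [Matrix.submatrix_map,
        show (σ.submatrix r s).map (IsLocalRing.residue A)
          = (IsLocalRing.residue A).mapMatrix (σ.submatrix r s) from rfl,
        ← RingHom.map_det]
      exact Ideal.Quotient.eq_zero_iff_mem.mpr hmem
  haveI : Invertible (σ.submatrix r s) := (σ.submatrix r s).invertibleOfIsUnitDet hunit
  set N : Matrix (Fin β) (Fin d) A := σ.submatrix id s with hN
  -- N is injective
  have hinj : Function.Injective N.mulVecLin := by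
    rw [← LinearMap.ker_eq_bot, LinearMap.ker_eq_bot']
    intro x hx
    have hBx : (σ.submatrix r s) *ᵥ x = 0 := by
      ext i
      have h := congrFun hx (r i)
      simpa [hN, mulVec_apply'] using h
    calc x = (⅟(σ.submatrix r s) * (σ.submatrix r s)) *ᵥ x := by
            rw [invOf_mul_self, one_mulVec]
      _ = ⅟(σ.submatrix r s) *ᵥ ((σ.submatrix r s) *ᵥ x) := by rw [mulVec_mulVec]
      _ = 0 := by rw [hBx, mulVec_zero]
  -- range equality
  have hrange : LinearMap.range σ.mulVecLin = LinearMap.range N.mulVecLin := by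
    apply le_antisymm
    · rintro y ⟨v, rfl⟩
      refine ⟨fun i => ∑ j, ((⅟(σ.submatrix r s)) *ᵥ fun m => σ (r m) j) i * v j, ?_⟩
      ext k
      simp only [mulVecLin_apply, mulVec_apply', hN, Matrix.submatrix_apply, id,
        Finset.mul_sum]
      rw [Finset.sum_comm]
      refine Finset.sum_congr rfl fun j _ => ?_
      rw [key_col σ r s hr hs H1 k j, Finset.sum_mul]
      exact Finset.sum_congr rfl fun i _ => by simp only [mulVec_apply']; ring
    · rintro y ⟨v, rfl⟩
      refine ⟨fun j => ∑ i, if s i = j then v i else 0, ?_⟩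
      ext k
      simp only [mulVecLin_apply, mulVec_apply', hN, Matrix.submatrix_apply, id,
        Finset.mul_sum]
      rw [Finset.sum_comm]
      refine Finset.sum_congr rfl fun i _ => ?_
      rw [Finset.sum_eq_single (s i)]
      · simp
      · intro j _ hj; simp [hj.symm]
      · intro h; exact absurd (Finset.mem_univ _) h
  have e1 : (Fin d → A) ≃ₗ[A] LinearMap.range N.mulVecLin :=
    LinearEquiv.ofInjective N.mulVecLin hinj
  have e2 : LinearMap.range σ.mulVecLin ≃ₗ[A] LinearMap.range N.mulVecLin :=
    LinearEquiv.ofEq _ _ hrange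
  exact ⟨e2.trans e1.symm⟩
end

section
/- Let R be a commutative Noetherian local ring with maximal ideal m, let (d^{i−1}, d^i) be a complex of free modules over R with middle rank l, and let k ≥ 1 be an integer. Suppose the cohomology jump ideal J^i_{k+1} is not contained in m. If (a,b) and (a',b') are two pairs of integers with a + b = a' + b' = l − k + 2 such that I_a(d^{i−1}) + I_b(d^i) ⊆ m and I_{a'}(d^{i−1}) + I_{b'}(d^i) ⊆ m, then (a,b) = (a',b'). -/
section DetIdeal

variable {A : Type*} [CommRing A] {I J : Type*} (M : Matrix I J A)

lemma detIdeal_succ_le (m : ℤ) : detIdeal M (m + 1) ≤ detIdeal M m := by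
  unfold detIdeal
  split_ifs with h1 h2 h2
  · exact le_rfl
  · omega
  · exact le_top
  · rw [show (m + 1).toNat = m.toNat + 1 by omega, Ideal.span_le]
    rintro x ⟨r, c, hr, hc, rfl⟩
    rw [Matrix.det_succ_row_zero]
    refine Ideal.sum_mem _ fun j _ => Ideal.mul_mem_left _ _ (Ideal.subset_span ?_)
    exact ⟨r ∘ Fin.succ, c ∘ j.succAbove, hr.comp (Fin.succ_injective _),
      hc.comp Fin.succAbove_right_injective, by rw [Matrix.submatrix_submatrix]⟩

lemma detIdeal_antitone : Antitone (detIdeal M) :=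
  antitone_int_of_succ_le (detIdeal_succ_le M)

end DetIdeal

section JumpIdeal

variable {A : Type*} [CommRing A] {l l1 l2 : ℕ}
  (d1 : Matrix (Fin l) (Fin l1) A) (d2 : Matrix (Fin l2) (Fin l) A)

lemma jumpIdeal_le_add {k a b : ℤ} (hab : a + b = l - k + 2) :
    jumpIdeal d1 d2 k ≤ detIdeal d1 a + detIdeal d2 b := by
  rw [show b = l - k + 2 - a by omega]
  exact iInf_le _ a

lemma le_of_not_jumpIdeal_succ_le {P : Ideal A} {k x y x' y' : ℤ}
    (hJ : ¬ jumpIdeal d1 d2 (k + 1) ≤ P)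
    (hxy : x + y = l - k + 2) (hxy' : x' + y' = l - k + 2)
    (hP : detIdeal d1 x + detIdeal d2 y ≤ P) (hP' : detIdeal d1 x' + detIdeal d2 y' ≤ P) :
    x' ≤ x := by
  by_contra! hlt
  refine hJ ((jumpIdeal_le_add d1 d2 (a := x' - 1) (b := y') (by omega)).trans ?_)
  rw [Submodule.add_eq_sup] at hP hP' ⊢
  exact sup_le ((detIdeal_antitone d1 (by omega : x ≤ x' - 1)).trans (le_sup_left.trans hP))
    (le_sup_right.trans hP')

end JumpIdeal

theorem unique_pair_of_det_ideals_in_max_general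
    {R : Type*} [CommRing R] [IsLocalRing R]
    {l l1 l2 : ℕ} (d1 : Matrix (Fin l) (Fin l1) R) (d2 : Matrix (Fin l2) (Fin l) R)
    (k : ℕ)
    (hJk1 : ¬ jumpIdeal d1 d2 ((k : ℤ) + 1) ≤ IsLocalRing.maximalIdeal R)
    (a b a' b' : ℤ)
    (hab : a + b = (l : ℤ) - k + 2) (hab' : a' + b' = (l : ℤ) - k + 2)
    (h : detIdeal d1 a + detIdeal d2 b ≤ IsLocalRing.maximalIdeal R)
    (h' : detIdeal d1 a' + detIdeal d2 b' ≤ IsLocalRing.maximalIdeal R) :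
    a = a' ∧ b = b' := by
  have ha : a = a' := le_antisymm (le_of_not_jumpIdeal_succ_le d1 d2 hJk1 hab' hab h' h)
    (le_of_not_jumpIdeal_succ_le d1 d2 hJk1 hab hab' h h')
  exact ⟨ha, by omega⟩

/-- Let `R` be a Noetherian local ring with maximal ideal `m`,
`(d1, d2)` a complex of free `R`-modules with middle rank `l`, and `k ≥ 1`.
Suppose `J^i_{k+1} ⊄ m`. If `(a, b)` and `(a', b')` are two pairs of integers with
`a + b = a' + b' = l - k + 2` such that `I_a(d1) + I_b(d2) ⊆ m` and
`I_{a'}(d1) + I_{b'}(d2) ⊆ m`, then `(a, b) = (a', b')`. -/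
theorem unique_pair_of_det_ideals_in_max
    {R : Type*} [CommRing R] [IsNoetherianRing R] [IsLocalRing R]
    {l l1 l2 : ℕ} (d1 : Matrix (Fin l) (Fin l1) R) (d2 : Matrix (Fin l2) (Fin l) R)
    (hcx : d2 * d1 = 0) (k : ℕ) (hk : 1 ≤ k)
    (hJk1 : ¬ jumpIdeal d1 d2 ((k : ℤ) + 1) ≤ IsLocalRing.maximalIdeal R)
    (a b a' b' : ℤ)
    (hab : a + b = (l : ℤ) - k + 2) (hab' : a' + b' = (l : ℤ) - k + 2)
    (h : detIdeal d1 a + detIdeal d2 b ≤ IsLocalRing.maximalIdeal R)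
    (h' : detIdeal d1 a' + detIdeal d2 b' ≤ IsLocalRing.maximalIdeal R) :
    a = a' ∧ b = b' :=
  unique_pair_of_det_ideals_in_max_general d1 d2 k hJk1 a b a' b' hab hab' h h'
end

section
/- Let A be a commutative local ring with maximal ideal m and residue field κ = A/m, and let v_1, …, v_r ∈ A^n be vectors whose images in κ^n under coordinatewise reduction modulo m are κ-linearly independent. Then v_1, …, v_r form a basis of the A-submodule N of A^n that they generate (so N is free of rank r), N is a direct summand of A^n, and the quotient A^n/N is a free A-module of rank n − r. -/
/-!
Extend the reductions of the `vᵢ` to a basis of `κⁿ` and lift the added vectors arbitrarily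
to `Aⁿ`. The resulting `n` vectors are the rows of a square matrix whose reduction is
invertible; as `A` is local, its determinant is then a unit, so they form a basis of `Aⁿ`
that starts with the `vᵢ`. Everything claimed is read off from this basis.
-/

open IsLocalRing Set

namespace Matrix

variable {m R S : Type*} [Fintype m] [DecidableEq m] [CommRing R] [CommRing S]

theorem span_row_eq_top_of_isUnit {M : Matrix m m R} (hM : IsUnit M) :
    Submodule.span R (range M.row) = ⊤ := by
  rw [← range_vecMulLinear, LinearMap.range_eq_top]
  exact vecMul_surjective_iff_isUnit.mpr hM

theorem isUnit_of_isUnit_map (f : R →+* S) [IsLocalHom f] {M : Matrix m m R}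
    (hM : IsUnit (M.map f)) : IsUnit M := by
  rw [isUnit_iff_isUnit_det, ← RingHom.mapMatrix_apply, ← RingHom.map_det] at hM
  exact (isUnit_iff_isUnit_det M).mpr (isUnit_of_map_unit f _ hM)

end Matrix

namespace Module.Basis

theorem sumExtend_apply_inl {ι K V : Type*} [DivisionRing K] [AddCommGroup V] [Module K V]
    {v : ι → V} (hv : LinearIndependent K v) (i : ι) : sumExtend hv (Sum.inl i) = v i := by
  simp only [sumExtend, Equiv.trans_def, coe_reindex, coe_extend, Function.comp_apply]
  rfl

theorem isCompl_span_range_inl_inr {ι ι' R M : Type*} [Ring R] [AddCommGroup M] [Module R M]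
    (B : Basis (ι ⊕ ι') R M) :
    IsCompl (Submodule.span R (range (B ∘ Sum.inl))) (Submodule.span R (range (B ∘ Sum.inr))) := by
  simpa only [range_comp] using
    B.linearIndependent.isCompl_span_image B.span_eq isCompl_range_inl_range_inr

end Module.Basis

namespace IsLocalRing

variable {A : Type*} [CommRing A] [IsLocalRing A]

theorem exists_basis_of_residue_basis {ι σ : Type*} [Fintype σ] [DecidableEq σ]
    (w : ι → σ → A) (b : Module.Basis ι (ResidueField A) (σ → ResidueField A))
    (hb : ∀ i j, b i j = residue A (w i j)) : ∃ B : Module.Basis ι A (σ → A), ⇑B = w := by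
  let e : ι ≃ σ := b.indexEquiv (Pi.basisFun _ σ)
  let M : Matrix σ σ A := Matrix.of fun s => w (e.symm s)
  have hMκ : IsUnit (M.map (residue A)) := by
    rw [← Matrix.linearIndependent_rows_iff_isUnit]
    convert (b.reindex e).linearIndependent
    ext s j
    simp [M, hb]
  have hM : IsUnit M := Matrix.isUnit_of_isUnit_map (residue A) hMκ
  refine ⟨(Module.Basis.mk (Matrix.linearIndependent_rows_of_isUnit hM)
    (Matrix.span_row_eq_top_of_isUnit hM).ge).reindex e.symm, ?_⟩
  ext i
  simp [M]

theorem exists_basis_sum_elim_of_linearIndependent_residue {n r : ℕ} (v : Fin r → Fin n → A)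
    (hv : LinearIndependent (ResidueField A) (fun i j => residue A (v i j))) :
    ∃ (u : Fin (n - r) → Fin n → A) (B : Module.Basis (Fin r ⊕ Fin (n - r)) A (Fin n → A)),
      ⇑B = Sum.elim v u := by
  let b := Module.Basis.sumExtend hv
  obtain ⟨u, hu⟩ : ∃ u : Module.Basis.sumExtendIndex hv → Fin n → A,
      ∀ k j, b (.inr k) j = residue A (u k j) :=
    ⟨fun k j => (residue_surjective (b (.inr k) j)).choose,
      fun k j => (residue_surjective _).choose_spec.symm⟩
  obtain ⟨B, hB⟩ := exists_basis_of_residue_basis (Sum.elim v u) b <| by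
    rintro (i | k) j
    · simp [b, Module.Basis.sumExtend_apply_inl]
    · exact hu k j
  have : Finite (Fin r ⊕ Module.Basis.sumExtendIndex hv) := Module.Finite.finite_basis b
  have : Finite (Module.Basis.sumExtendIndex hv) :=
    .of_injective _ (Sum.inr_injective (α := Fin r))
  have hcard : Nat.card (Module.Basis.sumExtendIndex hv) = n - r := by
    have := Module.finrank_eq_nat_card_basis b
    simp only [Module.finrank_fin_fun, Nat.card_sum, Nat.card_eq_fintype_card, Fintype.card_fin]
      at this
    omega
  let e := (Finite.equivFin _).trans (finCongr hcard)
  refine ⟨u ∘ e.symm, B.reindex ((Equiv.refl _).sumCongr e), ?_⟩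
  ext (i | k) : 1 <;> simp [hB]

end IsLocalRing

/-- Let `A` be a commutative local ring with residue field `κ`, and
`v₁, …, v_r ∈ Aⁿ` vectors whose coordinatewise reductions modulo the maximal ideal are
`κ`-linearly independent. Then the `vᵢ` form a basis of the submodule `N` they generate
(in particular `N` is free of rank `r`), `N` is a direct summand of `Aⁿ`, and `Aⁿ/N` is
free of rank `n - r`. -/
theorem span_of_residually_independent
    {A : Type*} [CommRing A] [IsLocalRing A] {n r : ℕ}
    (v : Fin r → (Fin n → A))
    (hv : LinearIndependent (IsLocalRing.ResidueField A)
      (fun i j => IsLocalRing.residue A (v i j))) :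
    LinearIndependent A v ∧
    Nonempty ((Submodule.span A (Set.range v)) ≃ₗ[A] (Fin r → A)) ∧
    (∃ N' : Submodule A (Fin n → A), IsCompl (Submodule.span A (Set.range v)) N') ∧
    Nonempty (((Fin n → A) ⧸ Submodule.span A (Set.range v)) ≃ₗ[A] (Fin (n - r) → A)) := by
  obtain ⟨u, B, hB⟩ := exists_basis_sum_elim_of_linearIndependent_residue v hv
  have hBv : ⇑B ∘ Sum.inl = v := by rw [hB, Sum.elim_comp_inl]
  have hvli : LinearIndependent A v := hBv ▸ B.linearIndependent.comp _ Sum.inl_injective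
  have hcompl := B.isCompl_span_range_inl_inr
  rw [hBv] at hcompl
  refine ⟨hvli, ⟨(Module.Basis.span hvli).equivFun⟩, ⟨_, hcompl⟩, ⟨?_⟩⟩
  exact (Submodule.quotientEquivOfIsCompl _ _ hcompl).trans
    (Module.Basis.span (B.linearIndependent.comp _ Sum.inr_injective)).equivFun
end

section
/- Let A be a commutative ring, c ≥ 1 an integer, and let M be the block matrix [[1_{c−1}, B], [0, D]], where 1_{c−1} is the (c−1)×(c−1) identity matrix, B is a (c−1)×q matrix, 0 is the p×(c−1) zero matrix, and D is a p×q matrix over A. Then the determinantal ideal I_c(M) equals the ideal of A generated by the entries of D. -/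
lemma det_mem_of_row_mem' {A : Type*} [CommRing A] {n : ℕ} (N : Matrix (Fin n) (Fin n) A)
    (𝔞 : Ideal A) (i : Fin n) (h : ∀ j, N i j ∈ 𝔞) : N.det ∈ 𝔞 := by
  rw [← Ideal.Quotient.eq_zero_iff_mem, RingHom.map_det]
  exact Matrix.det_eq_zero_of_row_eq_zero i
    (fun j => by simpa [Ideal.Quotient.eq_zero_iff_mem] using h j)

/-- Let `A` be a commutative ring, `c ≥ 1`, and `M` the block matrix
`[[1_{c-1}, B], [0, D]]` with `B` of size `(c-1) × q`, the zero block of size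
`p × (c-1)`, and `D` of size `p × q`. Then `I_c(M)` equals the ideal generated by the
entries of `D`. -/
theorem detIdeal_fromBlocks_one
    {A : Type*} [CommRing A] {p q : ℕ} (c : ℕ) (hc : 1 ≤ c)
    (B : Matrix (Fin (c - 1)) (Fin q) A) (D : Matrix (Fin p) (Fin q) A) :
    detIdeal (Matrix.fromBlocks (1 : Matrix (Fin (c - 1)) (Fin (c - 1)) A) B 0 D) (c : ℤ)
      = Ideal.span (Set.range fun ij : Fin p × Fin q => D ij.1 ij.2) := by
  have hcpos : ¬ ((c : ℤ) ≤ 0) := by exact_mod_cast not_le.mpr (by omega : (0:ℤ) < c)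
  have htn : (c : ℤ).toNat = c := Int.toNat_natCast c
  rw [detIdeal, if_neg hcpos]
  apply le_antisymm
  · rw [Ideal.span_le]
    rintro x ⟨r, co, hr, hco, rfl⟩
    -- find a row mapping to the bottom block
    have hex : ∃ k i, r k = Sum.inr i := by
      by_contra h
      push_neg at h
      have h' : ∀ k, ∃ a, r k = Sum.inl a := by
        intro k
        cases hk : r k with
        | inl a => exact ⟨a, rfl⟩
        | inr b => exact absurd hk (h k b)
      choose g hg using h'
      have hgi : Function.Injective g := fun a b hab => hr (by rw [hg, hg, hab])
      have := Fintype.card_le_of_injective g hgi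
      simp only [Fintype.card_fin, htn] at this
      omega
    obtain ⟨k, i, hk⟩ := hex
    apply det_mem_of_row_mem' _ _ k
    intro j
    simp only [Matrix.submatrix_apply, hk]
    cases hcj : co j with
    | inl a => simp [Matrix.fromBlocks]
    | inr b =>
      simp only [Matrix.fromBlocks_apply₂₂]
      exact Ideal.subset_span ⟨(i, b), rfl⟩
  · rw [Ideal.span_le]
    rintro x ⟨⟨i, j⟩, rfl⟩
    have hc' : (c - 1) + 1 = c := by omega
    set e : Fin ((c:ℤ).toNat) ≃ (Fin (c-1) ⊕ Fin 1) :=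
      (finCongr (by omega : (c:ℤ).toNat = (c-1)+1)).trans finSumFinEquiv.symm with he
    refine Ideal.subset_span ⟨(Sum.map id (fun _ : Fin 1 => i)) ∘ e,
      (Sum.map id (fun _ : Fin 1 => j)) ∘ e, ?_, ?_, ?_⟩
    · exact (Sum.map_injective.mpr ⟨Function.injective_id,
        Function.injective_of_subsingleton _⟩).comp e.injective
    · exact (Sum.map_injective.mpr ⟨Function.injective_id,
        Function.injective_of_subsingleton _⟩).comp e.injective
    · have : (Matrix.fromBlocks (1 : Matrix (Fin (c - 1)) (Fin (c - 1)) A) B 0 D).submatrix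
          ((Sum.map id (fun _ : Fin 1 => i)) ∘ e) ((Sum.map id (fun _ : Fin 1 => j)) ∘ e)
          = (Matrix.fromBlocks (1 : Matrix (Fin (c - 1)) (Fin (c - 1)) A)
              (Matrix.of fun (a : Fin (c-1)) (_ : Fin 1) => B a j) 0
              (Matrix.of fun (_ : Fin 1) (_ : Fin 1) => D i j)).submatrix e e := by
        ext a b
        simp only [Matrix.submatrix_apply, Function.comp_apply]
        rcases e a with a' | a' <;> rcases e b with b' | b' <;>
          simp [Matrix.fromBlocks]
      rw [this, Matrix.det_submatrix_equiv_self, Matrix.det_fromBlocks_zero₂₁]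
      simp [Matrix.det_fin_one]
end

section
/- Let M be a β×α matrix over a commutative ring A and c ≥ 1 an integer. If there is a submodule N of A^β generated by c−1 elements such that every column of M, viewed as an element of A^β, lies in N, then I_c(M) = 0. -/
open Matrix

/-- Auxiliary: a `c × c` matrix whose rows all lie in the span of `c - 1` vectors
has zero determinant. -/
theorem det_eq_zero_of_rows_in_span_aux {A : Type*} [CommRing A] {n : ℕ} (c : ℕ) (hc : 1 ≤ c)
    (P : Matrix (Fin n) (Fin n) A) (hn : n = c)
    (v : Fin (c - 1) → (Fin n → A)) (a : Fin n → Fin (c - 1) → A)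
    (hrow : ∀ j, P j = ∑ k, a j k • v k) : P.det = 0 := by
  have hP : P = fun j => ∑ k, a j k • v k := funext hrow
  have hms := (Matrix.detRowAlternating (n := Fin n) (R := A)).toMultilinearMap.map_sum
    (g := fun j k => a j k • v k)
  rw [show P.det = (Matrix.detRowAlternating (n := Fin n)
    (R := A)).toMultilinearMap P from rfl, hP, hms]
  apply Finset.sum_eq_zero
  intro t _
  have hti : ¬ Function.Injective t := by
    intro hinj
    have := Fintype.card_le_of_injective t hinj
    simp only [Fintype.card_fin, hn] at this
    omega
  rw [Function.not_injective_iff] at hti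
  obtain ⟨i, j, hij, hne⟩ := hti
  have : (Matrix.detRowAlternating (n := Fin n) (R := A)).toMultilinearMap
      (fun j_1 => a j_1 (t j_1) • v (t j_1))
      = (∏ j_1, a j_1 (t j_1)) • (Matrix.detRowAlternating (n := Fin n) (R := A))
        (fun j_1 => v (t j_1)) := by
    exact MultilinearMap.map_smul_univ _ _ _
  rw [this, (Matrix.detRowAlternating (n := Fin n) (R := A)).map_eq_zero_of_eq
      (fun j_1 => v (t j_1)) (show v (t i) = v (t j) by rw [hij]) hne, smul_zero]

/-- Let `M` be a `β × α` matrix over a commutative ring `A` and `c ≥ 1`.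
If there is a submodule `N` of `A^β` generated by `c - 1` elements such that every
column of `M` lies in `N`, then `I_c(M) = 0`. -/
theorem detIdeal_eq_bot_of_columns_in_span
    {A : Type*} [CommRing A] {α β : ℕ} (M : Matrix (Fin β) (Fin α) A) (c : ℕ) (hc : 1 ≤ c)
    (N : Submodule A (Fin β → A)) (g : Fin (c - 1) → (Fin β → A))
    (hN : N = Submodule.span A (Set.range g))
    (hcol : ∀ j : Fin α, (fun i => M i j) ∈ N) :
    detIdeal M (c : ℤ) = ⊥ := by
  rw [detIdeal, if_neg (by exact_mod_cast Nat.not_succ_le_zero 0 ∘ hc.trans), Ideal.span_eq_bot]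
  rintro x ⟨r, cc, hr, hcc, rfl⟩
  have hcoef : ∀ j : Fin α, ∃ a : Fin (c - 1) → A,
      (∑ k, a k • g k) = fun i => M i j := by
    intro j
    have := hcol j
    rw [hN] at this
    exact (Submodule.mem_span_range_iff_exists_fun A).mp this
  choose a ha using hcoef
  rw [← Matrix.det_transpose]
  refine det_eq_zero_of_rows_in_span_aux c hc _ (Int.toNat_natCast c)
    (fun k i => g k (r i)) (fun j => a (cc j)) ?_
  intro j
  ext i
  have := congr_fun (ha (cc j)) (r i)
  simpa [Finset.sum_apply] using this.symm
end

section
/- Let A be a commutative Artinian local ring, n a natural number, and N a submodule of A^n. Suppose N contains a free A-submodule of rank r and the quotient A^n/N contains a free A-submodule of rank s, where r + s = n. Then N is a free A-module of rank r and A^n/N is a free A-module of rank s. -/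
set_option maxHeartbeats 1000000 in
private lemma aux_surj {A : Type*} [CommRing A] [IsArtinianRing A] {r s : ℕ}
    (f : ((Fin r → A) × (Fin s → A)) →ₗ[A] (Fin (r + s) → A))
    (hf : Function.Injective f) : Function.Surjective f := by
  let E : (Fin (r + s) → A) ≃ₗ[A] (Fin r → A) × (Fin s → A) :=
    (LinearEquiv.funCongrLeft A A finSumFinEquiv) ≪≫ₗ
      LinearEquiv.sumArrowLequivProdArrow (Fin r) (Fin s) A A
  have hinj : Function.Injective (f ∘ₗ (E : (Fin (r + s) → A) →ₗ[A] _)) :=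
    hf.comp E.injective
  have hsurj := IsArtinian.surjective_of_injective_endomorphism
    (f ∘ₗ (E : (Fin (r + s) → A) →ₗ[A] _)) hinj
  intro z
  obtain ⟨w, hw⟩ := hsurj z
  exact ⟨E w, hw⟩


/-- Let `A` be a commutative Artinian local ring, `n : ℕ`, and `N` a
submodule of `Aⁿ`. Suppose `N` contains a free `A`-submodule of rank `r` and the
quotient `Aⁿ/N` contains a free `A`-submodule of rank `s`, where `r + s = n`. Then `N`
is free of rank `r` and `Aⁿ/N` is free of rank `s`. -/
theorem submodule_and_quotient_free
    {A : Type*} [CommRing A] [IsArtinianRing A] [IsLocalRing A]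
    (n r s : ℕ) (hrs : r + s = n) (N : Submodule A (Fin n → A))
    (P : Submodule A (Fin n → A)) (hPN : P ≤ N)
    (hP : Nonempty (P ≃ₗ[A] (Fin r → A)))
    (Q : Submodule A ((Fin n → A) ⧸ N))
    (hQ : Nonempty (Q ≃ₗ[A] (Fin s → A))) :
    Nonempty (N ≃ₗ[A] (Fin r → A)) ∧
    Nonempty (((Fin n → A) ⧸ N) ≃ₗ[A] (Fin s → A)) := by
  subst hrs
  obtain ⟨eP⟩ := hP
  obtain ⟨eQ⟩ := hQ
  -- embedding of the free rank-r module into A^n with image P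
  set g1 : (Fin r → A) →ₗ[A] (Fin (r + s) → A) := P.subtype ∘ₗ (eP.symm : (Fin r → A) →ₗ[A] P)
    with hg1def
  have hg1mem : ∀ x, g1 x ∈ P := fun x => (eP.symm x).2
  have hg1inj : Function.Injective g1 :=
    P.injective_subtype.comp eP.symm.injective
  -- lift the free rank-s submodule of the quotient to A^n
  obtain ⟨ψ, hψ⟩ := Module.projective_lifting_property N.mkQ
    (Q.subtype ∘ₗ (eQ.symm : (Fin s → A) →ₗ[A] Q)) (N.mkQ_surjective)
  have hψ' : ∀ y, N.mkQ (ψ y) = (eQ.symm y : (Fin (r + s) → A) ⧸ N) := fun y =>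
    congrFun (congrArg (fun f => f.toFun) hψ) y
  have hmkP : ∀ p, p ∈ P → N.mkQ p = 0 := fun p hp =>
    (Submodule.Quotient.mk_eq_zero N).2 (hPN hp)
  -- the combined map
  set f : (Fin r → A) × (Fin s → A) →ₗ[A] (Fin (r + s) → A) := g1.coprod ψ with hfdef
  have hfinj : Function.Injective f := by
    rw [injective_iff_map_eq_zero]
    rintro ⟨x, y⟩ h
    have h0 : g1 x + ψ y = 0 := h
    have hq : N.mkQ (g1 x + ψ y) = 0 := by rw [h0]; simp
    rw [map_add, hmkP _ (hg1mem x), zero_add, hψ'] at hq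
    have hy : eQ.symm y = 0 := Subtype.ext hq
    have hy0 : y = 0 := by
      have := congrArg eQ hy
      simpa using this
    subst hy0
    have hx : g1 x = 0 := by simpa using h0
    have : x = 0 := hg1inj (by simpa using hx)
    simp [this]
  have hfsurj : Function.Surjective f := aux_surj f hfinj
  -- conclude N = P
  have hNP : N = P := by
    refine le_antisymm ?_ hPN
    intro x hx
    obtain ⟨⟨a, b⟩, hab⟩ := hfsurj x
    have hab' : g1 a + ψ b = x := hab
    have hq : N.mkQ x = 0 := (Submodule.Quotient.mk_eq_zero N).2 hx
    rw [← hab', map_add, hmkP _ (hg1mem a), zero_add, hψ'] at hq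
    have hb : eQ.symm b = 0 := Subtype.ext hq
    have hb0 : b = 0 := by have := congrArg eQ hb; simpa using this
    subst hb0
    rw [← hab']
    simpa using hg1mem a
  -- conclude Q = ⊤
  have hQtop : Q = ⊤ := by
    rw [eq_top_iff]
    rintro z -
    obtain ⟨x, rfl⟩ := N.mkQ_surjective z
    obtain ⟨⟨a, b⟩, hab⟩ := hfsurj x
    have hab' : g1 a + ψ b = x := hab
    rw [← hab', map_add, hmkP _ (hg1mem a), zero_add, hψ']
    exact (eQ.symm b).2
  exact ⟨⟨(LinearEquiv.ofEq N P hNP) ≪≫ₗ eP⟩,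
    ⟨(Submodule.topEquiv.symm ≪≫ₗ (LinearEquiv.ofEq ⊤ Q hQtop.symm)) ≪≫ₗ eQ⟩⟩
end

section
/- Let (d^{i−1}, d^i) be a complex of free modules over a field κ with middle rank l, and let k ≥ 1 be an integer. Then dim_κ H^i ≥ k if and only if the cohomology jump ideal J^i_k is the zero ideal. -/
/-! Over a field every ideal is `0` or the whole ring, and `I_m(M) = 0` exactly when
`m > rank M` (a nonzero `m × m` minor exists iff `m ≤ rank M`). Hence `J^i_k = 0` iff some `a`
has `a > rank d¹` and `l - k + 2 - a > rank d²`, i.e. iff `k ≤ l - rank d¹ - rank d²`, and by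
rank–nullity the right-hand side is `dim H^i`. -/

namespace Matrix

variable {κ : Type*} [Field κ] {I J : Type*} [Fintype I] [Fintype J]

theorem exists_injective_linearIndependent_row_of_le_rank {m : ℕ} (M : Matrix I J κ)
    (hm : m ≤ M.rank) :
    ∃ r : Fin m → I, Function.Injective r ∧ LinearIndependent κ (M.submatrix r id).row := by
  obtain ⟨ι, a, ha, hspan, hli⟩ := exists_linearIndependent' κ M.row
  have : Fintype ι := Fintype.ofInjective a ha
  have hcard : M.rank = Fintype.card ι := by
    rw [rank_eq_finrank_span_row, ← hspan, finrank_span_eq_card hli]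
  obtain ⟨e⟩ :=
    Function.Embedding.nonempty_of_card_le (α := Fin m) (β := ι) (by simpa [← hcard])
  exact ⟨a ∘ e, ha.comp e.injective, hli.comp e e.injective⟩

theorem le_rank_iff_exists_submatrix_det_ne_zero {m : ℕ} (M : Matrix I J κ) :
    m ≤ M.rank ↔ ∃ (r : Fin m → I) (c : Fin m → J),
      Function.Injective r ∧ Function.Injective c ∧ (M.submatrix r c).det ≠ 0 := by
  constructor
  · intro hm
    obtain ⟨r, hr, hrows⟩ := M.exists_injective_linearIndependent_row_of_le_rank hm
    have hrank : m ≤ (M.submatrix r id)ᵀ.rank := by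
      rw [rank_transpose, hrows.rank_matrix, Fintype.card_fin]
    obtain ⟨c, hc, hcols⟩ :=
      (M.submatrix r id)ᵀ.exists_injective_linearIndependent_row_of_le_rank hrank
    have hunit : IsUnit (M.submatrix r c) := linearIndependent_cols_iff_isUnit.mp hcols
    exact ⟨r, c, hr, hc, ((isUnit_iff_isUnit_det _).mp hunit).ne_zero⟩
  · rintro ⟨r, c, -, -, hdet⟩
    simpa [rank_of_det_ne_zero hdet] using M.rank_submatrix_le r c

end Matrix

theorem Ideal.iInf_eq_bot_iff_exists {K ι : Type*} [DivisionSemiring K] (I : ι → Ideal K) :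
    ⨅ i, I i = ⊥ ↔ ∃ i, I i = ⊥ := by
  refine ⟨fun h => ?_, fun ⟨i, hi⟩ => le_bot_iff.mp (hi ▸ iInf_le I i)⟩
  by_contra! hne
  have htop : ⨅ i, I i = ⊤ := iInf_eq_top.mpr fun i => (I i).eq_bot_or_top.resolve_left (hne i)
  exact top_ne_bot (htop.symm.trans h)

section Field

variable {κ : Type*} [Field κ]

theorem detIdeal_eq_bot_iff {I J : Type*} [Fintype I] [Fintype J] (M : Matrix I J κ) (m : ℤ) :
    detIdeal M m = ⊥ ↔ (M.rank : ℤ) < m := by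
  unfold detIdeal
  split_ifs with hm
  · simp only [top_ne_bot, false_iff, not_lt]
    omega
  · have key := M.le_rank_iff_exists_submatrix_det_ne_zero (m := m.toNat)
    rw [Ideal.span_eq_bot]
    constructor
    · intro hall
      suffices ¬ m.toNat ≤ M.rank by omega
      rw [key]
      rintro ⟨r, c, hr, hc, hdet⟩
      exact hdet (hall _ ⟨r, c, hr, hc, rfl⟩)
    · rintro hlt _ ⟨r, c, hr, hc, rfl⟩
      by_contra hdet
      have := key.mpr ⟨r, c, hr, hc, hdet⟩
      omega

theorem jumpIdeal_eq_bot_iff {l l1 l2 : ℕ} (d1 : Matrix (Fin l) (Fin l1) κ)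
    (d2 : Matrix (Fin l2) (Fin l) κ) (k : ℤ) :
    jumpIdeal d1 d2 k = ⊥ ↔ k ≤ l - d1.rank - d2.rank := by
  simp only [jumpIdeal, Ideal.iInf_eq_bot_iff_exists, Submodule.add_eq_sup, sup_eq_bot_iff,
    detIdeal_eq_bot_iff]
  exact ⟨fun ⟨a, h1, h2⟩ => by omega, fun h => ⟨d1.rank + 1, by omega, by omega⟩⟩

theorem finrank_midCohomology_add_rank_add_rank {l l1 l2 : ℕ} {d1 : Matrix (Fin l) (Fin l1) κ}
    {d2 : Matrix (Fin l2) (Fin l) κ} (hcx : d2 * d1 = 0) :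
    Module.finrank κ (midCohomology d1 d2) + d1.rank + d2.rank = l := by
  have hker := LinearMap.finrank_range_add_finrank_ker d2.mulVecLin
  have hquot : Module.finrank κ (midCohomology d1 d2) + _ = _ :=
    Submodule.finrank_quotient_add_finrank _
  have hle : LinearMap.range d1.mulVecLin ≤ LinearMap.ker d2.mulVecLin :=
    LinearMap.range_le_ker_iff.mpr (by rw [← Matrix.mulVecLin_mul, hcx, Matrix.mulVecLin_zero])
  rw [(Submodule.comapSubtypeEquivOfLe hle).finrank_eq] at hquot
  simp only [Module.finrank_fin_fun] at hker
  rw [Matrix.rank, Matrix.rank]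
  omega

end Field

theorem finrank_cohomology_ge_iff_jumpIdeal_eq_bot_general
    {κ : Type*} [Field κ] {l l1 l2 : ℕ}
    (d1 : Matrix (Fin l) (Fin l1) κ) (d2 : Matrix (Fin l2) (Fin l) κ)
    (hcx : d2 * d1 = 0) (k : ℕ) :
    k ≤ Module.finrank κ (midCohomology d1 d2) ↔ jumpIdeal d1 d2 (k : ℤ) = ⊥ := by
  rw [jumpIdeal_eq_bot_iff]
  have := finrank_midCohomology_add_rank_add_rank hcx
  omega

/-- Let `(d1, d2)` be a complex of free modules over a field `κ` with
middle rank `l`, and `k ≥ 1`. Then `dim_κ H^i ≥ k` if and only if the cohomology jump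
ideal `J^i_k` is the zero ideal. -/
theorem finrank_cohomology_ge_iff_jumpIdeal_eq_bot
    {κ : Type*} [Field κ] {l l1 l2 : ℕ}
    (d1 : Matrix (Fin l) (Fin l1) κ) (d2 : Matrix (Fin l2) (Fin l) κ)
    (hcx : d2 * d1 = 0) (k : ℕ) (hk : 1 ≤ k) :
    k ≤ Module.finrank κ (midCohomology d1 d2) ↔ jumpIdeal d1 d2 (k : ℤ) = ⊥ :=
  finrank_cohomology_ge_iff_jumpIdeal_eq_bot_general d1 d2 hcx k
end

section
/- Let A be a commutative local ring with maximal ideal m and residue field κ = A/m, and let σ: A^α → A^β be an A-linear map. If the induced κ-linear map κ^α → κ^β, obtained by reducing the matrix of σ modulo m, has rank at least r, then the image of σ contains a free A-submodule of rank r which is a direct summand of A^β. -/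
open Matrix Module Submodule

/-!
Reduction modulo `m` commutes with determinants, so an invertible `r × r` minor of the reduced
matrix, which exists since its rank is at least `r`, is already invertible over `A`. If that minor
sits in rows `g` and columns `f`, the columns `f` of `σ` define a map `A^r → A^β` with a left
inverse: restrict to the rows `g`, then apply the inverse of the minor. The range of a split
injection is free and has the kernel of the splitting as a complement.
-/

theorem exists_linearIndependent_comp_of_le_finrank_span {K V ι : Type*} [DivisionRing K]
    [AddCommGroup V] [Module K V] [Finite ι] (w : ι → V) {r : ℕ}
    (hr : r ≤ finrank K (span K (Set.range w))) :
    ∃ f : Fin r → ι, LinearIndependent K (w ∘ f) := by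
  obtain ⟨κ, a, ha, hspan, hli⟩ := exists_linearIndependent' K w
  have := Finite.of_injective a ha
  cases nonempty_fintype κ
  rw [← hspan, finrank_span_eq_card hli] at hr
  obtain ⟨e⟩ : Nonempty (Fin r ↪ κ) := Function.Embedding.nonempty_of_card_le (by simpa using hr)
  exact ⟨a ∘ e, hli.comp e e.injective⟩

theorem Matrix.exists_isUnit_submatrix_of_le_rank {K m n : Type*} [Field K] [Fintype m]
    [Fintype n] (M : Matrix m n K) {r : ℕ} (hr : r ≤ M.rank) :
    ∃ (g : Fin r → m) (f : Fin r → n), IsUnit (M.submatrix g f) := by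
  rw [rank_eq_finrank_span_cols] at hr
  obtain ⟨f, hf⟩ := exists_linearIndependent_comp_of_le_finrank_span M.col hr
  have hrank : (M.submatrix id f).rank = r := by
    rw [← rank_transpose]
    exact hf.rank_matrix.trans (Fintype.card_fin r)
  obtain ⟨g, hg⟩ := exists_linearIndependent_comp_of_le_finrank_span (M.submatrix id f).row
    (by rw [← rank_eq_finrank_span_row, hrank])
  exact ⟨g, f, linearIndependent_rows_iff_isUnit.mp hg⟩

theorem Matrix.isUnit_of_isUnit_map_s17 {R S n : Type*} [CommRing R] [CommRing S] [Fintype n]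
    [DecidableEq n] (φ : R →+* S) [IsLocalHom φ] {N : Matrix n n R} (h : IsUnit (N.map φ)) :
    IsUnit N := by
  rw [isUnit_iff_isUnit_det, ← RingHom.mapMatrix_apply, ← RingHom.map_det] at h
  exact (isUnit_iff_isUnit_det N).mpr (isUnit_of_map_unit φ _ h)

theorem Matrix.exists_comp_mulVecLin_eq_id_of_isUnit_submatrix {R m n : Type*} [CommRing R]
    [Fintype m] [Fintype n] [DecidableEq n] (C : Matrix m n R) (g : n → m)
    (h : IsUnit (C.submatrix g id)) :
    ∃ l : (m → R) →ₗ[R] (n → R), l ∘ₗ C.mulVecLin = LinearMap.id := by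
  refine ⟨(C.submatrix g id)⁻¹.mulVecLin ∘ₗ LinearMap.funLeft R R g, LinearMap.ext fun x => ?_⟩
  change (C.submatrix g id)⁻¹ *ᵥ (C.submatrix g id *ᵥ x) = x
  rw [mulVec_mulVec, nonsing_inv_mul _ ((isUnit_iff_isUnit_det _).mp h), one_mulVec]

theorem LinearMap.isCompl_range_ker_of_comp_eq_id {R M N : Type*} [Ring R] [AddCommGroup M]
    [Module R M] [AddCommGroup N] [Module R N] {i : M →ₗ[R] N} {l : N →ₗ[R] M}
    (h : l ∘ₗ i = LinearMap.id) : IsCompl (range i) (ker l) := by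
  have hli : ∀ x, l (i x) = x := LinearMap.congr_fun h
  refine ⟨disjoint_def.mpr ?_, codisjoint_iff_exists_add_eq.mpr fun x => ?_⟩
  · rintro _ ⟨y, rfl⟩ hy
    rw [mem_ker, hli] at hy
    rw [hy, map_zero]
  · exact ⟨i (l x), x - i (l x), ⟨l x, rfl⟩, by simp [hli], add_sub_cancel _ _⟩

theorem Matrix.range_mulVecLin_submatrix_le {R m n p : Type*} [CommRing R] [Fintype n]
    [Fintype p] (M : Matrix m n R) (f : p → n) :
    LinearMap.range (M.submatrix id f).mulVecLin ≤ LinearMap.range M.mulVecLin := by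
  rw [range_mulVecLin, range_mulVecLin]
  exact span_mono (Set.range_comp_subset_range f M.col)

/-- Let `A` be a commutative local ring with residue field `κ`, and
`σ : A^α → A^β` an `A`-linear map. If the induced `κ`-linear map `κ^α → κ^β`, obtained
by reducing the matrix of `σ` modulo the maximal ideal, has rank at least `r`, then the
image of `σ` contains a free `A`-submodule of rank `r` which is a direct summand of
`A^β`. -/
theorem image_contains_free_direct_summand
    {A : Type*} [CommRing A] [IsLocalRing A] {α β : ℕ}
    (σ : Matrix (Fin β) (Fin α) A) (r : ℕ)
    (h : r ≤ (σ.map (IsLocalRing.residue A)).rank) :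
    ∃ P : Submodule A (Fin β → A), P ≤ LinearMap.range σ.mulVecLin ∧
      Nonempty (P ≃ₗ[A] (Fin r → A)) ∧ ∃ Q : Submodule A (Fin β → A), IsCompl P Q := by
  obtain ⟨g, f, hgf⟩ := exists_isUnit_submatrix_of_le_rank _ h
  obtain ⟨l, hl⟩ := exists_comp_mulVecLin_eq_id_of_isUnit_submatrix (σ.submatrix id f) g
    (isUnit_of_isUnit_map_s17 (IsLocalRing.residue A) hgf)
  exact ⟨_, range_mulVecLin_submatrix_le σ f,
    ⟨(LinearEquiv.ofInjective _ (LinearMap.injective_of_comp_eq_id _ _ hl)).symm⟩,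
    _, LinearMap.isCompl_range_ker_of_comp_eq_id hl⟩
end
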